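/- Let S be a stable cut in a graph G with a unique critical vertex u∈S, and let w∉S be a vertex with x_S(w)=0 (i.e., d_S(w)=d(w)/2). Then φ(S⊕w) ≥ φ(S). -/

import Mathlib

/-!
Moving `x` into `S` keeps the cut size, since exactly half of the edges at `x` cross. As
`φ(S) = C_S − d_S(u)`, it suffices that no cross degree of the new cut exceeds `d_S(u)`. Vertices of
`S` only lose crossing edges, `x` keeps its cross degree `d(x)/2 < d_S(u)`, and any other vertex
`v ∉ S` gains at most the edge `vx`; as cross degrees are integers, `d_S(v) < d_S(u)` leaves room
for it.
-/

open Finset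

noncomputable section

variable {V : Type*} [Fintype V] [DecidableEq V]

/-- Total weight of edges crossing the cut `S` (each unordered crossing edge counted once). -/
def cutW (w : V → V → ℝ) (S : Finset V) : ℝ :=
  ∑ u ∈ S, ∑ v ∈ Sᶜ, w u v

/-- Weighted degree of a vertex. -/
def degW (w : V → V → ℝ) (v : V) : ℝ := ∑ u, w v u

/-- Total weight of crossing edges incident to `v`. -/
def crossDegW (w : V → V → ℝ) (S : Finset V) (v : V) : ℝ :=
  ∑ u, if (v ∈ S ∧ u ∉ S) ∨ (u ∈ S ∧ v ∉ S) then w v u else 0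

/-- Total weight of crossing edges incident to at least one vertex of `F`. -/
def crossDegSetW (w : V → V → ℝ) (S F : Finset V) : ℝ :=
  ∑ u ∈ S, ∑ v ∈ Sᶜ, if u ∈ F ∨ v ∈ F then w u v else 0

/-- Weight of edges crossing `S` that avoid `F`: the cut `S − F` in `G − F`. -/
def cutMinusW (w : V → V → ℝ) (S F : Finset V) : ℝ :=
  ∑ u ∈ S, ∑ v ∈ Sᶜ, if u ∉ F ∧ v ∉ F then w u v else 0

/-- The cut obtained from `S` by moving `v` to the opposite side. -/
def flipCut (S : Finset V) (v : V) : Finset V :=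
  if v ∈ S then S.erase v else insert v S

/-- The k-fault-tolerant value of the cut `S` against an adaptive adversary. -/
noncomputable def ftValW (w : V → V → ℝ) (S : Finset V) (k : ℕ) : ℝ :=
  sInf ((fun F => cutMinusW w S F) '' {F : Finset V | F.card = k})

/-- The single-fault FT value of the cut `S`. -/
noncomputable def ft1W (w : V → V → ℝ) (S : Finset V) : ℝ :=
  sInf (Set.range fun v => cutMinusW w S {v})

/-- Total edge weight of the graph. -/
def totalW (w : V → V → ℝ) : ℝ := (∑ u, ∑ v, w u v) / 2

/-- Maximum weighted degree. -/
noncomputable def maxDegW (w : V → V → ℝ) : ℝ := sSup (Set.range (degW w))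

lemma crossDegW_of_mem (w : V → V → ℝ) {S : Finset V} {a : V} (ha : a ∈ S) :
    crossDegW w S a = ∑ q ∈ Sᶜ, w a q := by
  rw [crossDegW, ← sum_filter]
  congr 1
  ext q
  simp [ha]

lemma crossDegW_of_notMem (w : V → V → ℝ) {S : Finset V} {a : V} (ha : a ∉ S) :
    crossDegW w S a = ∑ q ∈ S, w a q := by
  rw [crossDegW, ← sum_filter]
  congr 1
  ext q
  simp [ha]

lemma crossDegW_mem_range_intCast (w : V → V → ℝ) (h01 : ∀ u v, w u v = 0 ∨ w u v = 1)
    (S : Finset V) (v : V) : crossDegW w S v ∈ (Int.castRingHom ℝ).range := by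
  refine Subring.sum_mem _ fun q _ => ?_
  split_ifs
  · rcases h01 v q with h | h <;> simp [h]
  · exact zero_mem _

lemma add_one_le_of_lt_of_mem_range_intCast {a b : ℝ} (ha : a ∈ (Int.castRingHom ℝ).range)
    (hb : b ∈ (Int.castRingHom ℝ).range) (hab : a < b) : a + 1 ≤ b := by
  obtain ⟨m, rfl⟩ := ha
  obtain ⟨n, rfl⟩ := hb
  simp only [eq_intCast] at hab ⊢
  exact_mod_cast (Int.cast_lt.mp hab : m < n)

lemma cutMinusW_singleton (w : V → V → ℝ) (hsym : ∀ u v, w u v = w v u)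
    (S : Finset V) (a : V) :
    cutMinusW w S {a} = cutW w S - crossDegW w S a := by
  have hsplit : ∀ p q, (if p ∉ ({a} : Finset V) ∧ q ∉ ({a} : Finset V) then w p q else 0)
      = w p q - if p = a ∨ q = a then w p q else 0 := by
    intro p q
    by_cases hp : p = a <;> by_cases hq : q = a <;> simp [hp, hq]
  simp only [cutMinusW, cutW, hsplit, sum_sub_distrib, sub_right_inj]
  by_cases ha : a ∈ S
  · have hq : ∀ q ∈ Sᶜ, q ≠ a := fun q hq => ne_of_mem_of_not_mem hq (notMem_compl.mpr ha)
    rw [crossDegW_of_mem w ha, sum_eq_single_of_mem a ha]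
    · exact sum_congr rfl fun q _ => if_pos (Or.inl rfl)
    · intro p _ hpa
      exact sum_eq_zero fun q hqS => if_neg (by simp [hpa, hq q hqS])
  · rw [crossDegW_of_notMem w ha]
    refine sum_congr rfl fun p hp => ?_
    simp [ne_of_mem_of_not_mem hp ha, ha, hsym p a]

lemma crossDegW_insert_self (w : V → V → ℝ) (hdiag : ∀ v, w v v = 0) {S : Finset V} {x : V}
    (hx : x ∉ S) : crossDegW w (insert x S) x = degW w x - crossDegW w S x := by
  rw [crossDegW_of_mem w (mem_insert_self x S), crossDegW_of_notMem w hx, compl_insert,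
    sum_erase _ (hdiag x), degW, ← sum_add_sum_compl S]
  ring

lemma crossDegW_insert_of_mem (w : V → V → ℝ) {S : Finset V} {x v : V} (hx : x ∉ S)
    (hv : v ∈ S) : crossDegW w (insert x S) v = crossDegW w S v - w v x := by
  rw [crossDegW_of_mem w (mem_insert_of_mem hv), crossDegW_of_mem w hv, compl_insert,
    sum_erase_eq_sub (mem_compl.mpr hx)]

lemma crossDegW_insert_of_notMem (w : V → V → ℝ) {S : Finset V} {x v : V} (hx : x ∉ S)
    (hv : v ∉ S) (hvx : v ≠ x) : crossDegW w (insert x S) v = crossDegW w S v + w v x := by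
  rw [crossDegW_of_notMem w (by simp [hv, hvx]), crossDegW_of_notMem w hv, sum_insert hx,
    add_comm]

lemma cutW_insert (w : V → V → ℝ) (hsym : ∀ u v, w u v = w v u) (hdiag : ∀ v, w v v = 0)
    {S : Finset V} {x : V} (hx : x ∉ S) :
    cutW w (insert x S) = cutW w S + degW w x - 2 * crossDegW w S x := by
  have hxrow := crossDegW_insert_self w hdiag hx
  rw [crossDegW_of_mem w (mem_insert_self x S)] at hxrow
  have hcol : ∑ p ∈ S, w p x = crossDegW w S x := by
    rw [crossDegW_of_notMem w hx]
    exact sum_congr rfl fun p _ => hsym p x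
  rw [cutW, sum_insert hx, hxrow, compl_insert]
  simp only [sum_erase_eq_sub (mem_compl.mpr hx), sum_sub_distrib, hcol, cutW]
  ring

lemma crossDegW_insert_le (w : V → V → ℝ) (h01 : ∀ u v, w u v = 0 ∨ w u v = 1)
    (hdiag : ∀ v, w v v = 0) {S : Finset V} {u x : V} (hu : u ∈ S)
    (huniq : ∀ v, v ≠ u → crossDegW w S v < crossDegW w S u) (hx : x ∉ S)
    (hxcross : crossDegW w S x = degW w x / 2) (v : V) :
    crossDegW w (insert x S) v ≤ crossDegW w S u := by
  have hw : 0 ≤ w v x ∧ w v x ≤ 1 := by rcases h01 v x with h | h <;> simp [h]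
  have huniq_le : ∀ v, crossDegW w S v ≤ crossDegW w S u := fun v =>
    (eq_or_ne v u).elim (fun h => h ▸ le_rfl) fun h => (huniq v h).le
  by_cases hvS : v ∈ S
  · rw [crossDegW_insert_of_mem w hx hvS]
    linarith [huniq_le v]
  by_cases hvx : v = x
  · subst hvx
    rw [crossDegW_insert_self w hdiag hx]
    linarith [huniq_le v]
  · rw [crossDegW_insert_of_notMem w hx hvS hvx]
    have := add_one_le_of_lt_of_mem_range_intCast (crossDegW_mem_range_intCast w h01 S v)
      (crossDegW_mem_range_intCast w h01 S u) (huniq v (ne_of_mem_of_not_mem hu hvS).symm)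
    linarith

theorem stmt_9_general (w : V → V → ℝ) (hsym : ∀ u v, w u v = w v u)
    (h01 : ∀ u v, w u v = 0 ∨ w u v = 1) (hdiag : ∀ v, w v v = 0)
    (S : Finset V)
    (u : V) (hu : u ∈ S) (hcrit : cutMinusW w S {u} = ft1W w S)
    (huniq : ∀ v : V, v ≠ u → crossDegW w S v < crossDegW w S u)
    (x : V) (hx : x ∉ S) (hxcross : crossDegW w S x = degW w x / 2) :
    ft1W w S ≤ ft1W w (flipCut S x) := by
  have hflip : flipCut S x = insert x S := if_neg hx
  have hcut : cutW w (insert x S) = cutW w S := by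
    rw [cutW_insert w hsym hdiag hx]
    linarith
  have : Nonempty V := ⟨u⟩
  rw [hflip, ← hcrit, ft1W, ← iInf]
  refine le_ciInf fun v => ?_
  rw [cutMinusW_singleton w hsym, cutMinusW_singleton w hsym, hcut]
  linarith [crossDegW_insert_le w h01 hdiag hu huniq hx hxcross v]

theorem stmt_9 (w : V → V → ℝ) (hsym : ∀ u v, w u v = w v u)
    (h01 : ∀ u v, w u v = 0 ∨ w u v = 1) (hdiag : ∀ v, w v v = 0)
    (S : Finset V)
    (hstable : ∀ v, (degW w v - 1) / 2 < crossDegW w S v)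
    (u : V) (hu : u ∈ S) (hcrit : cutMinusW w S {u} = ft1W w S)
    (huniq : ∀ v : V, v ≠ u → crossDegW w S v < crossDegW w S u)
    (x : V) (hx : x ∉ S) (hxcross : crossDegW w S x = degW w x / 2) :
    ft1W w S ≤ ft1W w (flipCut S x) :=
  stmt_9_general w hsym h01 hdiag S u hu hcrit huniq x hx hxcross
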